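/- Define F : ℝ³ × (ℝ \ {0}) → ℝ⁴ by F(q,p,z,t) = (q, p·t, −z, t). For differentiable functions f, g : ℝ⁴ → ℝ (coordinates (Q,P,Z,T)), define {f,g}_can = ∂_P f·∂_Q g − ∂_Q f·∂_P g + ∂_T f·∂_Z g − ∂_Z f·∂_T g, and for differentiable u, v : ℝ³ × (ℝ \ {0}) → ℝ (coordinates (q,p,z,t), t ≠ 0) define {u,v}_Π = (1/t)(∂_p u·∂_q v − ∂_q u·∂_p v) + (p/t)(∂_p u·∂_z v − ∂_z u·∂_p v) − (∂_t u·∂_z v − ∂_z u·∂_t v). Then for all differentiable f, g : ℝ⁴ → ℝ and all (q,p,z,t) with t ≠ 0: {f∘F, g∘F}_Π(q,p,z,t) = {f,g}_can(F(q,p,z,t)). -/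

import Mathlib

/-- Partial derivative in the first coordinate of `ℝ⁴`. -/
noncomputable def pd1 (u : ℝ × ℝ × ℝ × ℝ → ℝ) (P : ℝ × ℝ × ℝ × ℝ) : ℝ :=
  deriv (fun s => u (s, P.2.1, P.2.2.1, P.2.2.2)) P.1

/-- Partial derivative in the second coordinate of `ℝ⁴`. -/
noncomputable def pd2 (u : ℝ × ℝ × ℝ × ℝ → ℝ) (P : ℝ × ℝ × ℝ × ℝ) : ℝ :=
  deriv (fun s => u (P.1, s, P.2.2.1, P.2.2.2)) P.2.1

/-- Partial derivative in the third coordinate of `ℝ⁴`. -/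
noncomputable def pd3 (u : ℝ × ℝ × ℝ × ℝ → ℝ) (P : ℝ × ℝ × ℝ × ℝ) : ℝ :=
  deriv (fun s => u (P.1, P.2.1, s, P.2.2.2)) P.2.2.1

/-- Partial derivative in the fourth coordinate of `ℝ⁴`. -/
noncomputable def pd4 (u : ℝ × ℝ × ℝ × ℝ → ℝ) (P : ℝ × ℝ × ℝ × ℝ) : ℝ :=
  deriv (fun s => u (P.1, P.2.1, P.2.2.1, s)) P.2.2.2

/-- Canonical Poisson bracket on `ℝ⁴` with coordinates `(Q,P,Z,T)`:
`{f,g} = ∂_P f·∂_Q g − ∂_Q f·∂_P g + ∂_T f·∂_Z g − ∂_Z f·∂_T g`. -/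
noncomputable def canBr (f g : ℝ × ℝ × ℝ × ℝ → ℝ) (P : ℝ × ℝ × ℝ × ℝ) : ℝ :=
  pd2 f P * pd1 g P - pd1 f P * pd2 g P + pd4 f P * pd3 g P - pd3 f P * pd4 g P

/-- The Poissonized contact bracket on coordinates `(q,p,z,t)`, `t ≠ 0`:
`{u,v} = (1/t)(∂_p u·∂_q v − ∂_q u·∂_p v) + (p/t)(∂_p u·∂_z v − ∂_z u·∂_p v)
        − (∂_t u·∂_z v − ∂_z u·∂_t v)`. -/
noncomputable def piBr (u v : ℝ × ℝ × ℝ × ℝ → ℝ) (P : ℝ × ℝ × ℝ × ℝ) : ℝ :=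
  (1 / P.2.2.2) * (pd2 u P * pd1 v P - pd1 u P * pd2 v P)
  + (P.2.1 / P.2.2.2) * (pd2 u P * pd3 v P - pd3 u P * pd2 v P)
  - (pd4 u P * pd3 v P - pd3 u P * pd4 v P)

/-- `F(q,p,z,t) = (q, p·t, −z, t)`. -/
def Fmap (P : ℝ × ℝ × ℝ × ℝ) : ℝ × ℝ × ℝ × ℝ :=
  (P.1, P.2.1 * P.2.2.2, -P.2.2.1, P.2.2.2)

lemma deriv_comp_curve (f : ℝ × ℝ × ℝ × ℝ → ℝ) (hf : Differentiable ℝ f)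
    (c : ℝ → ℝ × ℝ × ℝ × ℝ) (v : ℝ × ℝ × ℝ × ℝ) (s : ℝ)
    (hc : HasDerivAt c v s) :
    deriv (fun x => f (c x)) s = fderiv ℝ f (c s) v :=
  ((hf (c s)).hasFDerivAt.comp_hasDerivAt s hc).deriv

lemma pd1_eq (f : ℝ × ℝ × ℝ × ℝ → ℝ) (hf : Differentiable ℝ f) (P : ℝ × ℝ × ℝ × ℝ) :
    pd1 f P = fderiv ℝ f P ((1 : ℝ), (0 : ℝ), (0 : ℝ), (0 : ℝ)) := by
  have hc : HasDerivAt (fun s : ℝ => (s, P.2.1, P.2.2.1, P.2.2.2))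
      ((1 : ℝ), (0 : ℝ), (0 : ℝ), (0 : ℝ)) P.1 :=
    (hasDerivAt_id P.1).prodMk (((hasDerivAt_const _ _).prodMk
      ((hasDerivAt_const _ _).prodMk (hasDerivAt_const _ _))))
  simpa [pd1] using deriv_comp_curve f hf _ _ P.1 hc

lemma pd2_eq (f : ℝ × ℝ × ℝ × ℝ → ℝ) (hf : Differentiable ℝ f) (P : ℝ × ℝ × ℝ × ℝ) :
    pd2 f P = fderiv ℝ f P ((0 : ℝ), (1 : ℝ), (0 : ℝ), (0 : ℝ)) := by
  have hc : HasDerivAt (fun s : ℝ => (P.1, s, P.2.2.1, P.2.2.2))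
      ((0 : ℝ), (1 : ℝ), (0 : ℝ), (0 : ℝ)) P.2.1 :=
    (hasDerivAt_const _ _).prodMk ((hasDerivAt_id _).prodMk
      ((hasDerivAt_const _ _).prodMk (hasDerivAt_const _ _)))
  simpa [pd2] using deriv_comp_curve f hf _ _ P.2.1 hc

lemma pd3_eq (f : ℝ × ℝ × ℝ × ℝ → ℝ) (hf : Differentiable ℝ f) (P : ℝ × ℝ × ℝ × ℝ) :
    pd3 f P = fderiv ℝ f P ((0 : ℝ), (0 : ℝ), (1 : ℝ), (0 : ℝ)) := by
  have hc : HasDerivAt (fun s : ℝ => (P.1, P.2.1, s, P.2.2.2))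
      ((0 : ℝ), (0 : ℝ), (1 : ℝ), (0 : ℝ)) P.2.2.1 :=
    (hasDerivAt_const _ _).prodMk ((hasDerivAt_const _ _).prodMk
      ((hasDerivAt_id _).prodMk (hasDerivAt_const _ _)))
  simpa [pd3] using deriv_comp_curve f hf _ _ P.2.2.1 hc

lemma pd4_eq (f : ℝ × ℝ × ℝ × ℝ → ℝ) (hf : Differentiable ℝ f) (P : ℝ × ℝ × ℝ × ℝ) :
    pd4 f P = fderiv ℝ f P ((0 : ℝ), (0 : ℝ), (0 : ℝ), (1 : ℝ)) := by
  have hc : HasDerivAt (fun s : ℝ => (P.1, P.2.1, P.2.2.1, s))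
      ((0 : ℝ), (0 : ℝ), (0 : ℝ), (1 : ℝ)) P.2.2.2 :=
    (hasDerivAt_const _ _).prodMk ((hasDerivAt_const _ _).prodMk
      ((hasDerivAt_const _ _).prodMk (hasDerivAt_id _)))
  simpa [pd4] using deriv_comp_curve f hf _ _ P.2.2.2 hc

/-- `F(q,p,z,t) = (q, pt, −z, t)` is a Poisson map from the Poissonized
contact structure to the canonical Poisson bracket on `ℝ⁴`. -/
theorem stmt_6 (f g : ℝ × ℝ × ℝ × ℝ → ℝ)
    (hf : Differentiable ℝ f) (hg : Differentiable ℝ g) :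
    ∀ q p z t : ℝ, t ≠ 0 →
      piBr (f ∘ Fmap) (g ∘ Fmap) (q, p, z, t) = canBr f g (Fmap (q, p, z, t)) := by
  intro q p z t ht
  have key : ∀ (h : ℝ × ℝ × ℝ × ℝ → ℝ), Differentiable ℝ h →
      pd1 (h ∘ Fmap) (q, p, z, t) = pd1 h (Fmap (q, p, z, t)) ∧
      pd2 (h ∘ Fmap) (q, p, z, t) = t * pd2 h (Fmap (q, p, z, t)) ∧
      pd3 (h ∘ Fmap) (q, p, z, t) = -pd3 h (Fmap (q, p, z, t)) ∧
      pd4 (h ∘ Fmap) (q, p, z, t)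
        = p * pd2 h (Fmap (q, p, z, t)) + pd4 h (Fmap (q, p, z, t)) := by
    intro h hh
    set D := fderiv ℝ h (Fmap (q, p, z, t)) with hD
    have hF : Fmap (q, p, z, t) = (q, p * t, -z, t) := rfl
    refine ⟨?_, ?_, ?_, ?_⟩
    · have hc : HasDerivAt (fun s : ℝ => ((s, p * t, -z, t) : ℝ × ℝ × ℝ × ℝ))
          ((1 : ℝ), (0 : ℝ), (0 : ℝ), (0 : ℝ)) q :=
        (hasDerivAt_id _).prodMk ((hasDerivAt_const _ _).prodMk
          ((hasDerivAt_const _ _).prodMk (hasDerivAt_const _ _)))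
      have := deriv_comp_curve h hh _ _ q hc
      rw [pd1_eq h hh (Fmap (q, p, z, t)), hF]
      simp only [pd1, Function.comp, Fmap]
      exact this
    · have hc : HasDerivAt (fun s : ℝ => ((q, s * t, -z, t) : ℝ × ℝ × ℝ × ℝ))
          ((0 : ℝ), t, (0 : ℝ), (0 : ℝ)) p := by
        refine (hasDerivAt_const _ _).prodMk (HasDerivAt.prodMk ?_
          ((hasDerivAt_const _ _).prodMk (hasDerivAt_const _ _)))
        simpa using (hasDerivAt_id p).mul_const t
      have := deriv_comp_curve h hh _ _ p hc
      rw [pd2_eq h hh (Fmap (q, p, z, t)), hF]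
      simp only [pd2, Function.comp, Fmap]
      rw [this]
      have : ((0 : ℝ), t, (0 : ℝ), (0 : ℝ))
          = t • (((0 : ℝ), (1 : ℝ), (0 : ℝ), (0 : ℝ)) : ℝ × ℝ × ℝ × ℝ) := by
        simp [Prod.smul_def]
      rw [this, map_smul]; rfl
    · have hc : HasDerivAt (fun s : ℝ => ((q, p * t, -s, t) : ℝ × ℝ × ℝ × ℝ))
          ((0 : ℝ), (0 : ℝ), (-1 : ℝ), (0 : ℝ)) z := by
        refine (hasDerivAt_const _ _).prodMk ((hasDerivAt_const _ _).prodMk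
          (HasDerivAt.prodMk ?_ (hasDerivAt_const _ _)))
        exact hasDerivAt_neg z
      have := deriv_comp_curve h hh _ _ z hc
      rw [pd3_eq h hh (Fmap (q, p, z, t)), hF]
      simp only [pd3, Function.comp, Fmap]
      rw [this]
      have : ((0 : ℝ), (0 : ℝ), (-1 : ℝ), (0 : ℝ))
          = (-1 : ℝ) • (((0 : ℝ), (0 : ℝ), (1 : ℝ), (0 : ℝ)) : ℝ × ℝ × ℝ × ℝ) := by
        simp [Prod.smul_def]
      rw [this, map_smul]; simp
    · have hc : HasDerivAt (fun s : ℝ => ((q, p * s, -z, s) : ℝ × ℝ × ℝ × ℝ))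
          ((0 : ℝ), p, (0 : ℝ), (1 : ℝ)) t := by
        refine (hasDerivAt_const _ _).prodMk (HasDerivAt.prodMk ?_
          ((hasDerivAt_const _ _).prodMk (hasDerivAt_id _)))
        simpa using (hasDerivAt_id t).const_mul p
      have := deriv_comp_curve h hh _ _ t hc
      rw [pd2_eq h hh (Fmap (q, p, z, t)), pd4_eq h hh (Fmap (q, p, z, t)), hF]
      simp only [pd4, Function.comp, Fmap]
      rw [this]
      have : ((0 : ℝ), p, (0 : ℝ), (1 : ℝ))
          = p • (((0 : ℝ), (1 : ℝ), (0 : ℝ), (0 : ℝ)) : ℝ × ℝ × ℝ × ℝ)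
            + (((0 : ℝ), (0 : ℝ), (0 : ℝ), (1 : ℝ)) : ℝ × ℝ × ℝ × ℝ) := by
        simp [Prod.smul_def, Prod.ext_iff]
      rw [this, map_add, map_smul]; rfl
  obtain ⟨hf1, hf2, hf3, hf4⟩ := key f hf
  obtain ⟨hg1, hg2, hg3, hg4⟩ := key g hg
  simp only [piBr, canBr, hf1, hf2, hf3, hf4, hg1, hg2, hg3, hg4]
  field_simp
  ring
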